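/- arXiv:1911.01687 — 2 statements merged into one kernel-verified Lean document; each statement's English description precedes it below -/
import Mathlib

section
/- Let k ≥ 1 and W_k(n) = ((k+1)^n - (-1)^n)/(k+2). Then every positive integer admits at most one valid W-expansion n = Σ_{j=1}^r x_j W_k(j), where validity means x_j ∈ {0,...,k}, x_r ≠ 0, and the digit word x_r ⋯ x_1 ends with an even number (possibly zero) of digits equal to k. -/
/-!
Clearing the denominator, `(k + 2) W_k(n) = (k + 1)^n - (-1)^n`, gives the recursion
`W_k(n + 1) = (k + 1) W_k(n) + (-1)^n` and the summation formula
`k Σ_{j ≤ m} W_k(j) = W_k(m + 1) - [m even]`. Hence a word of length `m` with digits `≤ k`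
and an even run of `k`'s at its low end has value `< W_k(m + 1)`: either some digit is below `k`,
which costs at least one `W_k(j) ≥ 1`, or all digits are `k` and `m` is even. A nonzero leading
digit forces value `≥ W_k(m)`, so by monotonicity of `W_k` the value determines the length. For
words of equal length, the all-`k` word is the only one of maximal value `k Σ_{j ≤ m} W_k(j)`;
otherwise the leading digit is the quotient of the value by `W_k(m)`, and removing it keeps the
even run of `k`'s, so induction on the length finishes.
-/


def W (k : ℤ) (n : ℕ) : ℤ := ((k + 1) ^ n - (-1) ^ n) / (k + 2)

/-- `x = [x_1, x_2, …, x_r]` (least significant digit first) is a valid `W`-expansion digit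
word: nonempty, digits in `[0,k]`, leading digit `x_r ≠ 0`, and the word `x_r x_{r-1} ⋯ x_1`
ends with an even number (possibly zero) of digits equal to `k`. -/
def ValidW (k : ℕ) (x : List ℕ) : Prop :=
  x ≠ [] ∧ (∀ d ∈ x, d ≤ k) ∧ x.getLastD 0 ≠ 0 ∧
    Even ((x.takeWhile fun d => d = k).length)

/-- The value `Σ_{j=1}^r x_j W_k(j)` of a digit word `x = [x_1, …, x_r]`. -/
def valW (k : ℕ) (x : List ℕ) : ℤ :=
  ∑ i ∈ Finset.range x.length, (x.getD i 0 : ℤ) * W k (i + 1)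

section W

variable {k : ℤ}

lemma add_two_mul_W (k : ℤ) (n : ℕ) : (k + 2) * W k n = (k + 1) ^ n - (-1) ^ n := by
  have h : k + 2 ∣ (k + 1) ^ n - (-1) ^ n := by
    simpa [add_assoc, one_add_one_eq_two] using sub_dvd_pow_sub_pow (k + 1) (-1) n
  exact Int.mul_ediv_cancel' h

lemma W_one (hk : k + 2 ≠ 0) : W k 1 = 1 := by
  simp [W, show k + 1 + 1 = k + 2 by ring, hk]

lemma W_succ (hk : k + 2 ≠ 0) (n : ℕ) : W k (n + 1) = (k + 1) * W k n + (-1) ^ n := by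
  apply mul_left_cancel₀ hk
  linear_combination add_two_mul_W k (n + 1) - (k + 1) * add_two_mul_W k n

lemma W_nonneg (hk : 0 ≤ k) (n : ℕ) : 0 ≤ W k n := by
  have h1 : 1 ≤ (k + 1) ^ n := one_le_pow₀ (by linarith)
  have h2 : (-1 : ℤ) ^ n ≤ 1 := by rcases neg_one_pow_eq_or ℤ n with h | h <;> simp [h]
  refine nonneg_of_mul_nonneg_right ?_ (by linarith : (0 : ℤ) < k + 2)
  linarith [add_two_mul_W k n]

lemma W_pos (hk : 1 ≤ k) {n : ℕ} (hn : n ≠ 0) : 0 < W k n := by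
  have h1 : k + 1 ≤ (k + 1) ^ n := le_self_pow₀ (by linarith) hn
  have h2 : (-1 : ℤ) ^ n ≤ 1 := by rcases neg_one_pow_eq_or ℤ n with h | h <;> simp [h]
  refine pos_of_mul_pos_right ?_ (by linarith : (0 : ℤ) ≤ k + 2)
  linarith [add_two_mul_W k n]

lemma W_monotone (hk : 1 ≤ k) : Monotone (W k) := by
  refine monotone_nat_of_le_succ fun n => ?_
  rw [W_succ (by linarith)]
  rcases n.eq_zero_or_pos with rfl | hn
  · simp [W]
  · have : 1 ≤ k * W k n := one_le_mul_of_one_le_of_one_le hk (W_pos hk hn.ne')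
    rcases neg_one_pow_eq_or ℤ n with h | h <;> linarith

def sumW (k : ℤ) (m : ℕ) : ℤ := ∑ i ∈ Finset.range m, W k (i + 1)

lemma two_mul_mul_sumW (hk : k + 2 ≠ 0) (m : ℕ) :
    2 * (k * sumW k m) + 1 + (-1) ^ m = 2 * W k (m + 1) := by
  induction m with
  | zero => simp [sumW, W_one hk]
  | succ m ih =>
    rw [sumW, Finset.sum_range_succ, ← sumW]
    linear_combination ih - 2 * W_succ hk (m + 1)

lemma mul_sumW_le_W (hk : k + 2 ≠ 0) (m : ℕ) : k * sumW k m ≤ W k (m + 1) := by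
  have := two_mul_mul_sumW hk m
  rcases neg_one_pow_eq_or ℤ m with h | h <;> linarith

lemma mul_sumW_add_one (hk : k + 2 ≠ 0) {m : ℕ} (hm : Even m) :
    k * sumW k m + 1 = W k (m + 1) := by
  have := two_mul_mul_sumW hk m
  rw [hm.neg_one_pow] at this
  linarith

end W

def AdmissibleW (k : ℕ) (x : List ℕ) : Prop :=
  (∀ d ∈ x, d ≤ k) ∧ Even ((x.takeWhile fun d => d = k).length)

section valW

variable {k : ℕ} {x y : List ℕ}

lemma valW_concat (k : ℕ) (l : List ℕ) (d : ℕ) :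
    valW k (l ++ [d]) = valW k l + d * W k (l.length + 1) := by
  rw [valW, valW, List.length_append, List.length_singleton, Finset.sum_range_succ,
    List.getD_append_right _ _ _ _ le_rfl, Nat.sub_self]
  congr 1
  exact Finset.sum_congr rfl fun i hi => by
    rw [List.getD_append _ _ _ _ (Finset.mem_range.mp hi)]

lemma valW_nonneg (k : ℕ) (x : List ℕ) : 0 ≤ valW k x :=
  Finset.sum_nonneg fun i _ => mul_nonneg (by positivity) (W_nonneg (by positivity) _)

lemma valW_eq_mul_sumW (h : ∀ d ∈ x, d = k) : valW k x = k * sumW k x.length := by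
  rw [valW, sumW, Finset.mul_sum]
  refine Finset.sum_congr rfl fun i hi => ?_
  have hi := Finset.mem_range.mp hi
  rw [List.getD_eq_getElem _ _ hi, h _ (List.getElem_mem hi)]

lemma valW_lt_mul_sumW (hk : 1 ≤ k) (hx : ∀ d ∈ x, d ≤ k) (h : ∃ d ∈ x, d ≠ k) :
    valW k x < k * sumW k x.length := by
  obtain ⟨_, hd, hdk⟩ := h
  obtain ⟨i, hi, rfl⟩ := List.getElem_of_mem hd
  rw [valW, sumW, Finset.mul_sum]
  have hW : ∀ j, 0 < W k (j + 1) := fun j => W_pos (by exact_mod_cast hk) j.succ_ne_zero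
  refine Finset.sum_lt_sum (fun j hj => ?_) ⟨i, Finset.mem_range.mpr hi, ?_⟩
  · have hj := Finset.mem_range.mp hj
    rw [List.getD_eq_getElem _ _ hj]
    exact mul_le_mul_of_nonneg_right (by exact_mod_cast hx _ (List.getElem_mem hj)) (hW j).le
  · rw [List.getD_eq_getElem _ _ hi]
    exact mul_lt_mul_of_pos_right (by exact_mod_cast lt_of_le_of_ne (hx _ hd) hdk) (hW i)

lemma forall_eq_of_valW_eq (hk : 1 ≤ k) (hx : ∀ d ∈ x, d = k) (hy : ∀ d ∈ y, d ≤ k)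
    (hlen : x.length = y.length) (hval : valW k x = valW k y) : ∀ d ∈ y, d = k := by
  by_contra h
  push Not at h
  have := valW_lt_mul_sumW hk hy h
  rw [← hval, ← hlen, valW_eq_mul_sumW hx] at this
  exact this.false

lemma valW_lt_W_length_succ (hk : 1 ≤ k) (hx : AdmissibleW k x) :
    valW k x < W k (x.length + 1) := by
  have hk2 : (k : ℤ) + 2 ≠ 0 := by positivity
  by_cases h : ∀ d ∈ x, d = k
  · have hrun : x.takeWhile (fun d => d = k) = x :=
      List.takeWhile_eq_self_iff.mpr (by simpa using h)
    have hlen : Even x.length := hrun ▸ hx.2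
    rw [valW_eq_mul_sumW h, ← mul_sumW_add_one hk2 hlen]
    exact lt_add_one _
  · push Not at h
    exact (valW_lt_mul_sumW hk hx.1 h).trans_le (mul_sumW_le_W hk2 _)

lemma W_length_le_valW (hx : x.getLastD 0 ≠ 0) : W k x.length ≤ valW k x := by
  obtain ⟨l, d, rfl⟩ : ∃ l d, x = l ++ [d] := by
    rcases List.eq_nil_or_concat x with rfl | h
    · exact absurd rfl hx
    · simpa using h
  rw [List.getLastD_concat] at hx
  rw [valW_concat, List.length_append, List.length_singleton]
  have hd : (1 : ℤ) ≤ d := by exact_mod_cast Nat.one_le_iff_ne_zero.mpr hx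
  nlinarith [valW_nonneg k l, W_nonneg (by positivity : (0 : ℤ) ≤ k) (l.length + 1)]

lemma AdmissibleW.of_concat {a : ℕ} {l : List ℕ} (h : AdmissibleW k (l ++ [a]))
    (hne : ¬ ∀ d ∈ l ++ [a], d = k) : AdmissibleW k l := by
  refine ⟨fun d hd => h.1 d (List.mem_append_left _ hd), ?_⟩
  have hrun := h.2
  rw [List.takeWhile_append] at hrun
  split_ifs at hrun with hl
  · have hself : l.takeWhile (fun d => d = k) = l := (List.takeWhile_prefix _).eq_of_length hl
    have hl : ∀ d ∈ l, d = k := by simpa using List.takeWhile_eq_self_iff.mp hself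
    have ha : a ≠ k := fun ha => hne (List.forall_mem_append.mpr ⟨hl, by simpa using ha⟩)
    simpa [hself, ha] using hrun
  · exact hrun

lemma eq_of_add_mul_eq_add_mul {w r s a b : ℤ} (hr : 0 ≤ r) (hrw : r < w) (hs : 0 ≤ s)
    (hsw : s < w) (h : r + a * w = s + b * w) : a = b := by
  have hw : w ≠ 0 := (hr.trans_lt hrw).ne'
  simpa [Int.add_mul_ediv_right _ _ hw, Int.ediv_eq_zero_of_lt hr hrw,
    Int.ediv_eq_zero_of_lt hs hsw] using congrArg (· / w) h

lemma eq_of_valW_eq (hk : 1 ≤ k) (hx : AdmissibleW k x)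
    (hy : AdmissibleW k y) (hlen : x.length = y.length) (hval : valW k x = valW k y) : x = y := by
  induction x using List.reverseRecOn generalizing y with
  | nil => exact (List.length_eq_zero_iff.mp hlen.symm).symm
  | append_singleton lx a ih =>
    by_cases hax : ∀ d ∈ lx ++ [a], d = k
    · have hay := forall_eq_of_valW_eq hk hax hy.1 hlen hval
      exact (List.eq_replicate_iff.mpr ⟨hlen, hax⟩).trans
        (List.eq_replicate_iff.mpr ⟨rfl, hay⟩).symm
    have hay : ¬ ∀ d ∈ y, d = k := fun hay =>
      hax (forall_eq_of_valW_eq hk hay hx.1 hlen.symm hval.symm)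
    obtain ⟨ly, b, rfl⟩ : ∃ ly b, y = ly ++ [b] := by
      rcases List.eq_nil_or_concat y with rfl | h
      · simp at hlen
      · simpa using h
    have hlx := hx.of_concat hax
    have hly := hy.of_concat hay
    have hlen' : lx.length = ly.length := by simpa using hlen
    rw [valW_concat, valW_concat, ← hlen'] at hval
    have hab : (a : ℤ) = b := eq_of_add_mul_eq_add_mul (valW_nonneg k lx)
      (valW_lt_W_length_succ hk hlx) (valW_nonneg k ly)
      (hlen' ▸ valW_lt_W_length_succ hk hly) hval
    rw [hab, add_left_inj] at hval
    rw [ih hlx hly hlen' hval, Nat.cast_inj.mp hab]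

lemma length_le_of_valW_le (hk : 1 ≤ k) (hx : AdmissibleW k x) (hy : y.getLastD 0 ≠ 0)
    (hval : valW k y ≤ valW k x) : y.length ≤ x.length := by
  by_contra! h
  have hW := W_monotone (by exact_mod_cast hk : (1 : ℤ) ≤ k) h
  exact (valW_lt_W_length_succ hk hx).not_ge (hW.trans ((W_length_le_valW hy).trans hval))

end valW

theorem stmt_12_general (k : ℕ) (hk : 1 ≤ k) (n : ℕ) (x y : List ℕ)
    (hx : ValidW k x) (hy : ValidW k y)
    (hxn : (n : ℤ) = valW k x) (hyn : (n : ℤ) = valW k y) : x = y := by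
  obtain ⟨-, hxd, hx0, hxe⟩ := hx
  obtain ⟨-, hyd, hy0, hye⟩ := hy
  have hval : valW k x = valW k y := hxn.symm.trans hyn
  have hlen : x.length = y.length :=
    le_antisymm (length_le_of_valW_le hk ⟨hyd, hye⟩ hx0 hval.le)
      (length_le_of_valW_le hk ⟨hxd, hxe⟩ hy0 hval.ge)
  exact eq_of_valW_eq hk ⟨hxd, hxe⟩ ⟨hyd, hye⟩ hlen hval

theorem stmt_12 (k : ℕ) (hk : 1 ≤ k) (n : ℕ) (hn : 0 < n) (x y : List ℕ)
    (hx : ValidW k x) (hy : ValidW k y)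
    (hxn : (n : ℤ) = valW k x) (hyn : (n : ℤ) = valW k y) : x = y :=
  stmt_12_general k hk n x y hx hy hxn hyn
end

section
/- Let t be a Sturmian sequence over {0,1} (subword complexity n+1 for all n ≥ 1) with t_0 = t_1 = 1, and let S = (s_n)_{n≥1} be the sum-free set generated by t via Cameron's bijection, listed in increasing order. Then the difference sequence (s_{n+1} - s_n)_{n≥1} takes values in {2,4} and is the image under the coding 0 → 2, 1 → 4 of a Sturmian sequence; in particular (s_{n+1}-s_n)_{n≥1} is itself Sturmian. -/
/-!
A Sturmian word is not eventually constant, so if `00` and `11` both occurred in it then so would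
`01` and `10`, one factor of length 2 too many. Hence `t` has no factor `00`, and Cameron's
construction gives `S = {2k+1 | t k = 1}`: an even `2l+2` is `1 + (2l+1)` or `3 + (2l-1)`, and no
odd number is a sum of two odd ones. So `s n = 2 e n + 1`, where `e` enumerates the ones of `t`,
and `t` is the image under `σ : 0 ↦ 1, 1 ↦ 10` of the word `u` with `u n = 1` iff
`e (n+1) - e n = 2`.

A binary word is Sturmian iff it has exactly one right special factor of each length, because
`p(n+1) = p(n) + #{right special factors of length n}`. If `w` is right special in `u` then `σ(w)1`
is right special in `t`; those of `t` are suffixes of one another, and `σ(·)1` reflects the suffix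
order, so `u` has at most one right special factor of each length. It has at least one, since
otherwise its complexity would be bounded, whereas `p_t(m) ≤ 2 p_u(m)`.
-/

/-- Cameron's greedy construction: `decisions t n` is the list of membership decisions
(in the sum-free set `θ(t)`) for the positions `1, 2, …, n`. -/
def decisions (t : ℕ → Bool) : ℕ → List Bool
  | 0 => []
  | n + 1 =>
    let L := decisions t n
    let isMem : ℕ → Bool := fun m => L.getD (m - 1) false
    let isStar : ℕ → Bool := fun m =>
      (List.range n).any fun a => decide (a + 1 < m) && isMem (a + 1) && isMem (m - (a + 1))
    let idx := ((List.range n).filter fun m => isStar (m + 1) = false).length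
    L ++ [if isStar (n + 1) = true then false else t idx]

/-- Membership of the positive integer `n` in the sum-free set `θ(t)`. -/
def memS (t : ℕ → Bool) (n : ℕ) : Prop := (decisions t n).getD (n - 1) false = true

/-- The set of factors of length `n` of the infinite word `t`. -/
def factorSet {α : Type*} (t : ℕ → α) (n : ℕ) : Set (List α) :=
  {w | ∃ i, w = (List.range n).map fun j => t (i + j)}

/-- `t` is Sturmian: it has exactly `n + 1` factors of each length `n ≥ 1`. -/
def IsSturmian {α : Type*} (t : ℕ → α) : Prop :=
  ∀ n, 1 ≤ n → (factorSet t n).ncard = n + 1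

section Factors
variable {α : Type*}

def factorAt (w : ℕ → α) (i n : ℕ) : List α := (List.range n).map fun j => w (i + j)

variable {w : ℕ → α}

lemma mem_factorSet {n : ℕ} {x : List α} : x ∈ factorSet w n ↔ ∃ i, factorAt w i n = x := by
  simp only [factorSet, factorAt, Set.mem_ofPred_eq, eq_comm]

lemma factorAt_mem_factorSet (i n : ℕ) : factorAt w i n ∈ factorSet w n := ⟨i, rfl⟩

@[simp] lemma length_factorAt (i n : ℕ) : (factorAt w i n).length = n := by
  simp [factorAt]

@[simp] lemma factorAt_zero (i : ℕ) : factorAt w i 0 = [] := rfl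

lemma factorAt_comp {β : Type*} (f : α → β) (i n : ℕ) :
    factorAt (f ∘ w) i n = (factorAt w i n).map f := by
  simp [factorAt]

lemma factorAt_add (i p q : ℕ) : factorAt w i (p + q) = factorAt w i p ++ factorAt w (i + p) q := by
  simp only [factorAt, List.range_add, List.map_append, List.map_map, Function.comp_def, add_assoc]

lemma factorAt_succ (i n : ℕ) : factorAt w i (n + 1) = factorAt w i n ++ [w (i + n)] := by
  rw [factorAt_add]; rfl

lemma factorAt_two (i : ℕ) : factorAt w i 2 = [w i, w (i + 1)] := rfl

lemma factorAt_append_mem_factorSet (i n : ℕ) :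
    factorAt w i n ++ [w (i + n)] ∈ factorSet w (n + 1) :=
  factorAt_succ i n ▸ factorAt_mem_factorSet i _

lemma take_factorAt (i : ℕ) {k n : ℕ} (h : k ≤ n) : (factorAt w i n).take k = factorAt w i k := by
  obtain ⟨q, rfl⟩ := Nat.exists_eq_add_of_le h
  rw [factorAt_add, List.take_left' (length_factorAt i k)]

lemma drop_factorAt (i k n : ℕ) : (factorAt w i n).drop k = factorAt w (i + k) (n - k) := by
  rcases le_or_gt k n with h | h
  · obtain ⟨q, rfl⟩ := Nat.exists_eq_add_of_le h
    rw [factorAt_add, List.drop_left' (length_factorAt i k), Nat.add_sub_cancel_left]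
  · rw [List.drop_of_length_le (by simp [h.le]), Nat.sub_eq_zero_of_le h.le, factorAt_zero]

lemma length_of_mem_factorSet {n : ℕ} {x : List α} (h : x ∈ factorSet w n) : x.length = n := by
  obtain ⟨i, rfl⟩ := mem_factorSet.1 h
  exact length_factorAt i n

lemma take_mem_factorSet {n : ℕ} {x : List α} (h : x ∈ factorSet w n) {k : ℕ} (hk : k ≤ n) :
    x.take k ∈ factorSet w k := by
  obtain ⟨i, rfl⟩ := mem_factorSet.1 h
  rw [take_factorAt i hk]
  exact factorAt_mem_factorSet _ _

lemma drop_mem_factorSet {n : ℕ} {x : List α} (h : x ∈ factorSet w n) (k : ℕ) :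
    x.drop k ∈ factorSet w (n - k) := by
  obtain ⟨i, rfl⟩ := mem_factorSet.1 h
  rw [drop_factorAt]
  exact factorAt_mem_factorSet _ _

lemma factorSet_finite [Finite α] (w : ℕ → α) (n : ℕ) : (factorSet w n).Finite :=
  (List.finite_length_eq α n).subset fun _ hx => length_of_mem_factorSet hx

lemma factorSet_zero : factorSet w 0 = {[]} :=
  Set.eq_singleton_iff_unique_mem.2
    ⟨⟨0, rfl⟩, fun _ hx => List.eq_nil_of_length_eq_zero (length_of_mem_factorSet hx)⟩

lemma ncard_factorSet_le_of_eventually_const (p : ℕ) (hp : ∀ m, p ≤ m → w m = w p) (n : ℕ) :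
    (factorSet w n).ncard ≤ p + 1 := by
  have hsub : factorSet w n ⊆ (fun i => factorAt w i n) '' Set.Iic p := by
    rintro _ ⟨i, rfl⟩
    rcases le_or_gt i p with hi | hi
    · exact ⟨i, hi, rfl⟩
    · refine ⟨p, Set.mem_Iic.2 le_rfl, List.map_congr_left fun j _ => ?_⟩
      rw [hp (i + j) (by omega), hp (p + j) (by omega)]
  calc (factorSet w n).ncard ≤ ((fun i => factorAt w i n) '' Set.Iic p).ncard :=
        Set.ncard_le_ncard hsub ((Set.finite_Iic p).image _)
    _ ≤ p + 1 := (Set.ncard_image_le (Set.finite_Iic p)).trans (Set.ncard_Iic_nat p).le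

end Factors

section RightSpecial
variable {w : ℕ → Bool}

def extendableBy (w : ℕ → Bool) (n : ℕ) (b : Bool) : Set (List Bool) :=
  {v | v ++ [b] ∈ factorSet w (n + 1)}

def rightSpecial (w : ℕ → Bool) (n : ℕ) : Set (List Bool) :=
  extendableBy w n false ∩ extendableBy w n true

lemma length_of_mem_rightSpecial {n : ℕ} {v : List Bool} (hv : v ∈ rightSpecial w n) :
    v.length = n := by
  simpa using length_of_mem_factorSet hv.1

lemma mem_factorSet_of_mem_extendableBy {n : ℕ} {b : Bool} {v : List Bool}
    (hv : v ∈ extendableBy w n b) : v ∈ factorSet w n := by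
  have hlen : v.length = n := by simpa using length_of_mem_factorSet hv
  simpa [hlen] using take_mem_factorSet hv n.le_succ

lemma factorSet_eq_union_extendableBy (n : ℕ) :
    factorSet w n = extendableBy w n false ∪ extendableBy w n true := by
  ext v
  constructor
  · rintro ⟨i, rfl⟩
    have hext := factorAt_append_mem_factorSet (w := w) i n
    cases hb : w (i + n)
    · exact Or.inl (hb ▸ hext)
    · exact Or.inr (hb ▸ hext)
  · rintro (hv | hv) <;>
    · exact mem_factorSet_of_mem_extendableBy hv

lemma ncard_factorSet_succ (n : ℕ) :
    (factorSet w (n + 1)).ncard = (factorSet w n).ncard + (rightSpecial w n).ncard := by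
  have hfin : ∀ b, (extendableBy w n b).Finite := fun b =>
    (factorSet_finite w n).subset fun _ => mem_factorSet_of_mem_extendableBy
  have hsplit : factorSet w (n + 1) =
      (· ++ [false]) '' extendableBy w n false ∪ (· ++ [true]) '' extendableBy w n true := by
    ext x
    constructor
    · intro hx
      obtain ⟨i, rfl⟩ := mem_factorSet.1 hx
      have hext := factorAt_append_mem_factorSet (w := w) i n
      rw [factorAt_succ]
      cases hb : w (i + n)
      · exact Or.inl ⟨_, hb ▸ hext, rfl⟩
      · exact Or.inr ⟨_, hb ▸ hext, rfl⟩
    · rintro (⟨v, hv, rfl⟩ | ⟨v, hv, rfl⟩) <;> exact hv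
  have hdisj : Disjoint ((· ++ [false]) '' extendableBy w n false)
      ((· ++ [true]) '' extendableBy w n true) := by
    rw [Set.disjoint_left]
    rintro _ ⟨v, -, rfl⟩ ⟨v', -, h⟩
    simpa using (List.append_inj' h rfl).2
  rw [hsplit, Set.ncard_union_eq hdisj ((hfin _).image _) ((hfin _).image _),
    Set.ncard_image_of_injective _ (List.append_left_injective _),
    Set.ncard_image_of_injective _ (List.append_left_injective _),
    ← Set.ncard_union_add_ncard_inter _ _ (hfin _) (hfin _), ← factorSet_eq_union_extendableBy]
  rfl

lemma drop_mem_rightSpecial {n : ℕ} {v : List Bool} (hv : v ∈ rightSpecial w n) {k : ℕ}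
    (hk : k ≤ n) : v.drop k ∈ rightSpecial w (n - k) := by
  have hlen := length_of_mem_rightSpecial hv
  have key : ∀ b, v ∈ extendableBy w n b → v.drop k ∈ extendableBy w (n - k) b := fun b hb => by
    have := drop_mem_factorSet hb k
    rwa [List.drop_append_of_le_length (by omega), show n + 1 - k = n - k + 1 by omega] at this
  exact ⟨key _ hv.1, key _ hv.2⟩

lemma monotone_ncard_factorSet : Monotone fun n => (factorSet w n).ncard :=
  monotone_nat_of_le_succ fun n => by
    simp only [ncard_factorSet_succ n, Nat.le_add_right]

lemma isSturmian_iff_ncard_rightSpecial :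
    IsSturmian w ↔ ∀ n, (rightSpecial w n).ncard = 1 := by
  have h0 : (factorSet w 0).ncard = 1 := by rw [factorSet_zero, Set.ncard_singleton]
  constructor
  · intro hw n
    have h := ncard_factorSet_succ (w := w) n
    rcases n.eq_zero_or_pos with rfl | hn
    · rw [hw 1 le_rfl, h0] at h; omega
    · rw [hw (n + 1) (by omega), hw n hn] at h; omega
  · rintro hw n -
    induction n with
    | zero => exact h0
    | succ n ih => rw [ncard_factorSet_succ, hw, ih]

lemma IsSturmian.rightSpecial_subsingleton (hw : IsSturmian w) (n : ℕ) :
    (rightSpecial w n).Subsingleton := by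
  obtain ⟨v, hv⟩ := Set.ncard_eq_one.1 (isSturmian_iff_ncard_rightSpecial.1 hw n)
  exact hv ▸ Set.subsingleton_singleton

lemma IsSturmian.isSuffix_of_mem_rightSpecial (hw : IsSturmian w) {m n : ℕ} {v v' : List Bool}
    (hv : v ∈ rightSpecial w m) (hv' : v' ∈ rightSpecial w n) (hmn : m ≤ n) : v <:+ v' := by
  have hdrop := drop_mem_rightSpecial hv' (Nat.sub_le n m)
  rw [Nat.sub_sub_self hmn] at hdrop
  exact hw.rightSpecial_subsingleton m hdrop hv ▸ List.drop_suffix _ _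

lemma rightSpecial_nonempty_of_unbounded (hw : ∀ C, ∃ m, C < (factorSet w m).ncard) (n : ℕ) :
    (rightSpecial w n).Nonempty := by
  by_contra hempty
  have hstable : ∀ m, n ≤ m → (factorSet w m).ncard ≤ (factorSet w n).ncard := by
    intro m hm
    induction m, hm using Nat.le_induction with
    | base => exact le_rfl
    | succ m hm ih =>
      have hrs : rightSpecial w m = ∅ := Set.eq_empty_of_forall_notMem fun v hv => by
        have hdrop := drop_mem_rightSpecial hv (Nat.sub_le m n)
        rw [Nat.sub_sub_self hm] at hdrop
        exact hempty ⟨_, hdrop⟩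
      rwa [ncard_factorSet_succ, hrs, Set.ncard_empty, add_zero]
  obtain ⟨m, hm⟩ := hw (factorSet w n).ncard
  have := hstable (max m n) (le_max_right m n)
  have := monotone_ncard_factorSet (w := w) (le_max_left m n)
  simp only at this
  omega

end RightSpecial

section Sturmian
variable {w : ℕ → Bool}

lemma IsSturmian.exists_ne_of_le (hw : IsSturmian w) (p : ℕ) : ∃ m, p ≤ m ∧ w m ≠ w p := by
  by_contra! h
  have := ncard_factorSet_le_of_eventually_const p h (p + 1)
  rw [hw (p + 1) (by omega)] at this
  omega

lemma pair_mem_factorSet_of_le {i j : ℕ} (hij : i ≤ j) (hj : w j ≠ w i) :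
    [w i, !w i] ∈ factorSet w 2 := by
  induction j, hij using Nat.le_induction with
  | base => exact absurd rfl hj
  | succ j _ ih =>
    by_cases hji : w j = w i
    · refine mem_factorSet.2 ⟨j, ?_⟩
      rw [factorAt_two, hji, Bool.eq_not.2 hj]
    · exact ih hji

lemma IsSturmian.pair_mem_factorSet (hw : IsSturmian w) (i : ℕ) :
    [w i, !w i] ∈ factorSet w 2 :=
  let ⟨_, him, hm⟩ := hw.exists_ne_of_le i
  pair_mem_factorSet_of_le him hm

lemma IsSturmian.not_mem_factorSet_false_false (hw : IsSturmian w)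
    (h11 : [true, true] ∈ factorSet w 2) : [false, false] ∉ factorSet w 2 := by
  intro h00
  obtain ⟨i, hi⟩ := mem_factorSet.1 h11
  obtain ⟨k, hk⟩ := mem_factorSet.1 h00
  rw [factorAt_two, List.cons.injEq] at hi hk
  have h10 := hw.pair_mem_factorSet i
  have h01 := hw.pair_mem_factorSet k
  rw [hi.1] at h10
  rw [hk.1] at h01
  have hsub : (({[true, true], [true, false], [false, true], [false, false]} :
      Finset (List Bool)) : Set (List Bool)) ⊆ factorSet w 2 := by
    intro x hx
    simp only [Finset.coe_insert, Finset.coe_singleton, Set.mem_insert_iff,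
      Set.mem_singleton_iff] at hx
    rcases hx with rfl | rfl | rfl | rfl <;> assumption
  have := Set.ncard_le_ncard hsub (factorSet_finite w 2)
  rw [Set.ncard_coe_finset, hw 2 (by norm_num)] at this
  exact absurd this (by decide)

lemma IsSturmian.eq_true_or_succ_eq_true (hw : IsSturmian w) (h0 : w 0 = true) (h1 : w 1 = true)
    (k : ℕ) : w k = true ∨ w (k + 1) = true := by
  by_contra! h
  refine hw.not_mem_factorSet_false_false (mem_factorSet.2 ⟨0, ?_⟩) (mem_factorSet.2 ⟨k, ?_⟩)
  · rw [factorAt_two, h0, h1]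
  · rw [factorAt_two, Bool.eq_false_iff.2 h.1, Bool.eq_false_iff.2 h.2]

end Sturmian

section Cameron
variable {t : ℕ → Bool}

def oddMem (t : ℕ → Bool) (m : ℕ) : Bool := decide (m % 2 = 1) && t (m / 2)

-- `memberOf` and `isSumOf` are the local `isMem` and `isStar` of `decisions`.
def memberOf (L : List Bool) (m : ℕ) : Bool := L.getD (m - 1) false

def isSumOf (L : List Bool) (n m : ℕ) : Bool :=
  (List.range n).any fun a => decide (a + 1 < m) && memberOf L (a + 1) && memberOf L (m - (a + 1))

lemma decisions_succ (t : ℕ → Bool) (n : ℕ) :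
    decisions t (n + 1) = decisions t n ++
      [if isSumOf (decisions t n) n (n + 1) = true then false
        else t ((List.range n).filter fun m => isSumOf (decisions t n) n (m + 1) = false).length] :=
  rfl

lemma length_filter_range_mod_two_eq_zero (n : ℕ) :
    ((List.range n).filter fun m => m % 2 = 0).length = (n + 1) / 2 := by
  induction n with
  | zero => rfl
  | succ n ih =>
    rw [List.range_succ, List.filter_append, List.length_append, ih]
    rcases Nat.mod_two_eq_zero_or_one n with h | h <;> simp [h] <;> omega

lemma memberOf_map_range (n : ℕ) {m : ℕ} (hm : 1 ≤ m) :
    memberOf ((List.range n).map fun j => oddMem t (j + 1)) m = (decide (m ≤ n) && oddMem t m) := by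
  rcases le_or_gt m n with h | h
  · rw [memberOf, List.getD_eq_getElem _ _ (by simp; omega)]
    simp [h, Nat.sub_add_cancel hm]
  · rw [memberOf, List.getD_eq_default _ _ (by simp; omega)]
    simp [h.not_ge]

lemma oddMem_eq_true {m : ℕ} : oddMem t m = true ↔ m % 2 = 1 ∧ t (m / 2) = true := by
  simp [oddMem]

lemma isSumOf_map_range_iff {n m : ℕ} (hm : m ≤ n + 1) :
    isSumOf ((List.range n).map fun j => oddMem t (j + 1)) n m = true ↔
      ∃ a b, a + b = m ∧ oddMem t a = true ∧ oddMem t b = true := by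
  simp only [isSumOf, List.any_eq_true, List.mem_range, Bool.and_eq_true, decide_eq_true_eq]
  constructor
  · rintro ⟨a, -, ⟨hlt, ha⟩, hb⟩
    rw [memberOf_map_range n (by omega), Bool.and_eq_true] at ha hb
    exact ⟨a + 1, m - (a + 1), by omega, ha.2, hb.2⟩
  · rintro ⟨a, b, rfl, ha, hb⟩
    have ha1 := (oddMem_eq_true.1 ha).1
    have hb1 := (oddMem_eq_true.1 hb).1
    refine ⟨a - 1, by omega, ⟨by omega, ?_⟩, ?_⟩
    · rw [memberOf_map_range n (by omega), Nat.sub_add_cancel (by omega), ha]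
      simp only [Bool.and_true, decide_eq_true_eq]; omega
    · rw [memberOf_map_range n (by omega), show a + b - (a - 1 + 1) = b by omega, hb]
      simp only [Bool.and_true, decide_eq_true_eq]; omega

lemma exists_oddMem_add_iff (h0 : t 0 = true) (h1 : t 1 = true)
    (hno : ∀ k, t k = true ∨ t (k + 1) = true) (m : ℕ) :
    (∃ a b, a + b = m ∧ oddMem t a = true ∧ oddMem t b = true) ↔ 2 ≤ m ∧ m % 2 = 0 := by
  simp only [oddMem_eq_true]
  constructor
  · rintro ⟨a, b, rfl, ⟨ha, -⟩, ⟨hb, -⟩⟩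
    omega
  · rintro ⟨hm2, hmeven⟩
    obtain ⟨l, rfl⟩ : ∃ l, m = 2 * l + 2 := ⟨m / 2 - 1, by omega⟩
    by_cases hl : t l = true
    · exact ⟨1, 2 * l + 1, by omega, ⟨rfl, h0⟩, by omega, by rwa [Nat.mul_add_div two_pos]⟩
    · obtain ⟨k, rfl⟩ : ∃ k, l = k + 1 :=
        Nat.exists_eq_add_one.2 (Nat.pos_of_ne_zero (by rintro rfl; exact hl h0))
      have hk : t k = true := (hno k).resolve_right hl
      exact ⟨3, 2 * k + 1, by omega, ⟨rfl, h1⟩, by omega, by rwa [Nat.mul_add_div two_pos]⟩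

lemma decisions_eq_map_range (h0 : t 0 = true) (h1 : t 1 = true)
    (hno : ∀ k, t k = true ∨ t (k + 1) = true) (n : ℕ) :
    decisions t n = (List.range n).map fun j => oddMem t (j + 1) := by
  induction n with
  | zero => rfl
  | succ n ih =>
    have hsum : ∀ m ≤ n + 1, isSumOf (decisions t n) n m = true ↔ 2 ≤ m ∧ m % 2 = 0 :=
      fun m hm => by rw [ih, isSumOf_map_range_iff hm, exists_oddMem_add_iff h0 h1 hno]
    have hidx : ((List.range n).filter fun m => isSumOf (decisions t n) n (m + 1) = false).length =
        (n + 1) / 2 := by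
      rw [← length_filter_range_mod_two_eq_zero]
      congr 1
      refine List.filter_congr fun m hm => ?_
      have := hsum (m + 1) (by simp at hm; omega)
      rw [Bool.eq_iff_iff, decide_eq_true_iff, decide_eq_true_iff, Bool.eq_false_iff, ne_eq, this]
      omega
    rw [decisions_succ, hidx, List.range_succ, List.map_append, ← ih]
    congr 2
    show _ = oddMem t (n + 1)
    by_cases hn : n % 2 = 0
    · rw [if_neg (by rw [hsum _ le_rfl]; omega), oddMem,
        decide_eq_true (by omega : (n + 1) % 2 = 1), Bool.true_and]
    · rw [if_pos ((hsum _ le_rfl).2 (by omega)), oddMem,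
        decide_eq_false (by omega : ¬(n + 1) % 2 = 1), Bool.false_and]

theorem memS_iff (h0 : t 0 = true) (h1 : t 1 = true) (hno : ∀ k, t k = true ∨ t (k + 1) = true)
    (m : ℕ) : memS t m ↔ m % 2 = 1 ∧ t (m / 2) = true := by
  rw [memS, decisions_eq_map_range h0 h1 hno, ← oddMem_eq_true]
  rcases m.eq_zero_or_pos with rfl | hm
  · simp [oddMem]
  · rw [← memberOf, memberOf_map_range m hm]
    simp

end Cameron

section Enumeration
variable {t : ℕ → Bool} {e : ℕ → ℕ}

lemma enum_zero (he : StrictMono e) (hrange : ∀ k, t k = true ↔ ∃ n, e n = k)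
    (h0 : t 0 = true) : e 0 = 0 := by
  obtain ⟨n, hn⟩ := (hrange 0).1 h0
  exact Nat.eq_zero_of_le_zero ((he.monotone n.zero_le).trans_eq hn)

lemma eq_false_of_enum_lt_of_lt_enum_succ (he : StrictMono e)
    (hrange : ∀ k, t k = true ↔ ∃ n, e n = k) {n k : ℕ} (hlo : e n < k) (hhi : k < e (n + 1)) :
    t k = false := by
  rw [Bool.eq_false_iff]
  intro hk
  obtain ⟨j, rfl⟩ := (hrange _).1 hk
  have := he.lt_iff_lt.1 hlo
  have := he.lt_iff_lt.1 hhi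
  omega

lemma enum_succ (he : StrictMono e) (hrange : ∀ k, t k = true ↔ ∃ n, e n = k)
    (hno : ∀ k, t k = true ∨ t (k + 1) = true) (n : ℕ) :
    e (n + 1) = if t (e n + 1) = true then e n + 1 else e n + 2 := by
  have hlt : e n < e (n + 1) := he n.lt_succ_self
  have hgap := fun k => eq_false_of_enum_lt_of_lt_enum_succ (n := n) (k := k) he hrange
  split_ifs with h
  · by_contra hne
    simp [hgap (e n + 1) (by omega) (by omega)] at h
  · have hnext : t (e (n + 1)) = true := (hrange _).2 ⟨_, rfl⟩
    have h2 : t (e n + 2) = true := (hno (e n + 1)).resolve_left h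
    by_contra hne
    rcases lt_or_gt_of_ne hne with hne | hne
    · rw [show e (n + 1) = e n + 1 by omega] at hnext
      exact h hnext
    · simp [hgap (e n + 2) (by omega) hne] at h2

end Enumeration

section Blocks

def block (b : Bool) : List Bool := if b then [true, false] else [true]

def blocks (l : List Bool) : List Bool := l.flatMap block

@[simp] lemma blocks_append (l l' : List Bool) : blocks (l ++ l') = blocks l ++ blocks l' :=
  List.flatMap_append

@[simp] lemma blocks_singleton (b : Bool) : blocks [b] = block b := by
  simp [blocks]

lemma length_le_length_blocks (l : List Bool) : l.length ≤ (blocks l).length := by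
  induction l with
  | nil => rfl
  | cons b l ih =>
    rw [blocks, List.flatMap_cons, List.length_append, ← blocks, List.length_cons]
    have : 1 ≤ (block b).length := by cases b <;> simp [block]
    omega

def reverseBlock (b : Bool) : List Bool := if b then [false, true] else [true]

lemma reverse_blocks (l : List Bool) : (blocks l).reverse = l.reverse.flatMap reverseBlock := by
  rw [blocks, List.reverse_flatMap]
  congr 1
  funext b
  cases b <;> rfl

lemma isPrefix_of_flatMap_reverseBlock :
    ∀ {v v' : List Bool}, v.flatMap reverseBlock <+: v'.flatMap reverseBlock → v <+: v'
  | [], _, _ => List.nil_prefix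
  | a :: v, [], h => by cases a <;> simp [reverseBlock] at h
  | a :: v, b :: v', h => by
    rw [List.flatMap_cons, List.flatMap_cons] at h
    obtain rfl : a = b := by
      cases a <;> cases b <;> simp_all [reverseBlock]
    exact List.cons_prefix_cons.2 ⟨rfl,
      isPrefix_of_flatMap_reverseBlock ((List.prefix_append_right_inj _).1 h)⟩

lemma isSuffix_of_blocks_append_true {w w' : List Bool}
    (h : blocks w ++ [true] <:+ blocks w' ++ [true]) : w <:+ w' := by
  rw [← List.reverse_prefix] at h ⊢
  simp only [List.reverse_append, List.reverse_singleton, List.singleton_append,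
    List.cons_prefix_cons, true_and, reverse_blocks] at h
  exact isPrefix_of_flatMap_reverseBlock h

end Blocks

section DerivedWord
variable {t : ℕ → Bool} {e : ℕ → ℕ}

def derivedWord (t : ℕ → Bool) (e : ℕ → ℕ) (n : ℕ) : Bool := !t (e n + 1)

variable (hone : ∀ n, t (e n) = true)
  (hsucc : ∀ n, e (n + 1) = if t (e n + 1) = true then e n + 1 else e n + 2)

include hsucc in
lemma enum_succ_eq_add_length_block (n : ℕ) :
    e (n + 1) = e n + (block (derivedWord t e n)).length := by
  rw [hsucc, derivedWord]
  cases t (e n + 1) <;> rfl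

include hone in
lemma factorAt_enum_block (n : ℕ) :
    factorAt t (e n) (block (derivedWord t e n)).length = block (derivedWord t e n) := by
  rw [derivedWord]
  cases h : t (e n + 1)
  · simp [block, factorAt_two, hone, h]
  · simp [block, factorAt, hone]

include hsucc in
lemma enum_add_eq_add_length_blocks (i n : ℕ) :
    e (i + n) = e i + (blocks (factorAt (derivedWord t e) i n)).length := by
  induction n with
  | zero => simp [blocks]
  | succ n ih =>
    rw [← add_assoc, enum_succ_eq_add_length_block hsucc, ih, factorAt_succ, blocks_append,
      blocks_singleton, List.length_append, add_assoc]

include hone hsucc in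
lemma factorAt_enum_blocks (i n : ℕ) :
    factorAt t (e i) (blocks (factorAt (derivedWord t e) i n)).length =
      blocks (factorAt (derivedWord t e) i n) := by
  induction n with
  | zero => simp [blocks]
  | succ n ih =>
    rw [factorAt_succ, blocks_append, blocks_singleton, List.length_append, factorAt_add, ih,
      ← enum_add_eq_add_length_blocks hsucc, factorAt_enum_block hone]

include hone hsucc in
lemma blocks_mem_factorSet {n : ℕ} {x : List Bool} (hx : x ∈ factorSet (derivedWord t e) n) :
    blocks x ∈ factorSet t (blocks x).length := by
  obtain ⟨i, rfl⟩ := mem_factorSet.1 hx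
  exact mem_factorSet.2 ⟨e i, factorAt_enum_blocks hone hsucc i n⟩

include hone hsucc in
lemma blocks_append_true_mem_factorSet {n : ℕ} {x : List Bool}
    (hx : x ∈ factorSet (derivedWord t e) n) :
    blocks x ++ [true] ∈ factorSet t ((blocks x).length + 1) := by
  obtain ⟨i, rfl⟩ := mem_factorSet.1 hx
  refine mem_factorSet.2 ⟨e i, ?_⟩
  rw [factorAt_succ, factorAt_enum_blocks hone hsucc, ← enum_add_eq_add_length_blocks hsucc,
    hone]

include hone hsucc in
lemma blocks_append_true_mem_rightSpecial {n : ℕ} {v : List Bool}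
    (hv : v ∈ rightSpecial (derivedWord t e) n) :
    blocks v ++ [true] ∈ rightSpecial t ((blocks v).length + 1) := by
  constructor
  · simpa [extendableBy, block] using blocks_mem_factorSet hone hsucc hv.2
  · simpa [extendableBy, block] using blocks_append_true_mem_factorSet hone hsucc hv.1

include hone hsucc in
lemma rightSpecial_derivedWord_subsingleton (ht : IsSturmian t) (n : ℕ) :
    (rightSpecial (derivedWord t e) n).Subsingleton := by
  intro v hv v' hv'
  have hlen : v.length = v'.length := by
    rw [length_of_mem_rightSpecial hv, length_of_mem_rightSpecial hv']
  have hw := blocks_append_true_mem_rightSpecial hone hsucc hv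
  have hw' := blocks_append_true_mem_rightSpecial hone hsucc hv'
  rcases le_total (blocks v).length (blocks v').length with hle | hle
  · exact (isSuffix_of_blocks_append_true
      (ht.isSuffix_of_mem_rightSpecial hw hw' (by omega))).eq_of_length hlen
  · exact ((isSuffix_of_blocks_append_true
      (ht.isSuffix_of_mem_rightSpecial hw' hw (by omega))).eq_of_length hlen.symm).symm

include hsucc in
lemma exists_enum_le_lt_enum_succ (he0 : e 0 = 0) (j : ℕ) : ∃ i, e i ≤ j ∧ j < e (i + 1) := by
  induction j with
  | zero => exact ⟨0, he0.le, by rw [hsucc]; split <;> omega⟩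
  | succ j ih =>
    obtain ⟨i, hij, hji⟩ := ih
    rcases (Nat.succ_le_of_lt hji).lt_or_eq with h | h
    · exact ⟨i, by omega, h⟩
    · exact ⟨i + 1, h.ge, by rw [hsucc (i + 1)]; split <;> omega⟩

include hone hsucc in
lemma factorAt_mem_image_blocks (he0 : e 0 = 0) (j m : ℕ) :
    factorAt t j m ∈ (fun x => (blocks x).take m) '' factorSet (derivedWord t e) m ∪
      (fun x => ((blocks x).drop 1).take m) '' factorSet (derivedWord t e) m := by
  rcases m with _ | m
  · exact Or.inl ⟨[], mem_factorSet.2 ⟨0, rfl⟩, rfl⟩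
  obtain ⟨i, hij, hji⟩ := exists_enum_le_lt_enum_succ hsucc he0 j
  set x := factorAt (derivedWord t e) i (m + 1)
  have hx : blocks x = factorAt t (e i) (blocks x).length :=
    (factorAt_enum_blocks hone hsucc i _).symm
  have hlen : e (i + (m + 1)) = e i + (blocks x).length := enum_add_eq_add_length_blocks hsucc i _
  have hgrow : e (i + 1) + m ≤ e (i + 1 + m) := by
    rw [enum_add_eq_add_length_blocks hsucc (i + 1) m]
    simpa using length_le_length_blocks (factorAt (derivedWord t e) (i + 1) m)
  have hstep : e (i + 1) ≤ e i + 2 := by rw [hsucc]; split <;> omega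
  rw [show i + 1 + m = i + (m + 1) by omega] at hgrow
  rcases (show j = e i ∨ j = e i + 1 by omega) with rfl | rfl
  · refine Or.inl ⟨x, factorAt_mem_factorSet _ _, ?_⟩
    simp only
    rw [hx, take_factorAt _ (by omega)]
  · refine Or.inr ⟨x, factorAt_mem_factorSet _ _, ?_⟩
    simp only
    rw [hx, drop_factorAt, take_factorAt _ (by omega)]

include hone hsucc in
lemma ncard_factorSet_le_two_mul (he0 : e 0 = 0) (m : ℕ) :
    (factorSet t m).ncard ≤ 2 * (factorSet (derivedWord t e) m).ncard := by
  have hfin := factorSet_finite (derivedWord t e) m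
  calc (factorSet t m).ncard
      ≤ ((fun x => (blocks x).take m) '' factorSet (derivedWord t e) m ∪
          (fun x => ((blocks x).drop 1).take m) '' factorSet (derivedWord t e) m).ncard :=
        Set.ncard_le_ncard
          (by rintro _ ⟨j, rfl⟩; exact factorAt_mem_image_blocks hone hsucc he0 j m)
          ((hfin.image _).union (hfin.image _))
    _ ≤ ((fun x => (blocks x).take m) '' factorSet (derivedWord t e) m).ncard +
          ((fun x => ((blocks x).drop 1).take m) '' factorSet (derivedWord t e) m).ncard :=
        Set.ncard_union_le _ _
    _ ≤ 2 * (factorSet (derivedWord t e) m).ncard := by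
        have := Set.ncard_image_le (f := fun x => (blocks x).take m) hfin
        have := Set.ncard_image_le (f := fun x => ((blocks x).drop 1).take m) hfin
        omega

include hone hsucc in
theorem isSturmian_derivedWord (he0 : e 0 = 0) (ht : IsSturmian t) :
    IsSturmian (derivedWord t e) := by
  refine isSturmian_iff_ncard_rightSpecial.2 fun n => ?_
  have hunbounded : ∀ C, ∃ m, C < (factorSet (derivedWord t e) m).ncard := fun C => by
    refine ⟨2 * C + 1, ?_⟩
    have := ncard_factorSet_le_two_mul hone hsucc he0 (2 * C + 1)
    rw [ht _ (by omega)] at this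
    omega
  obtain ⟨v, hv⟩ := rightSpecial_nonempty_of_unbounded hunbounded n
  exact Set.ncard_eq_one.2
    ⟨v, (rightSpecial_derivedWord_subsingleton hone hsucc ht n).eq_singleton_of_mem hv⟩

end DerivedWord

lemma IsSturmian.comp_injective {α β : Type*} {u : ℕ → α} (hu : IsSturmian u) {f : α → β}
    (hf : Function.Injective f) : IsSturmian (f ∘ u) := by
  intro n hn
  have himage : factorSet (f ∘ u) n = List.map f '' factorSet u n := by
    ext x
    simp only [mem_factorSet, Set.mem_image, factorAt_comp]
    constructor
    · rintro ⟨i, rfl⟩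
      exact ⟨_, ⟨i, rfl⟩, rfl⟩
    · rintro ⟨_, ⟨i, rfl⟩, rfl⟩
      exact ⟨i, rfl⟩
  rw [himage, Set.ncard_image_of_injective _ (List.map_injective_iff.2 hf), hu n hn]

theorem stmt_18 (t : ℕ → Bool) (hstur : IsSturmian t) (h0 : t 0 = true) (h1 : t 1 = true)
    (s : ℕ → ℕ) (hmono : StrictMono s) (hmem : ∀ n, memS t (s n))
    (hsurj : ∀ m, memS t m → ∃ n, s n = m) :
    (∀ n, s (n + 1) - s n = 2 ∨ s (n + 1) - s n = 4) ∧
      (∃ u : ℕ → Bool, IsSturmian u ∧ ∀ n, s (n + 1) - s n = if u n then 4 else 2) ∧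
      IsSturmian fun n => s (n + 1) - s n := by
  have hno := hstur.eq_true_or_succ_eq_true h0 h1
  have hmemS := memS_iff h0 h1 hno
  obtain ⟨e, rfl⟩ : ∃ e : ℕ → ℕ, s = fun n => 2 * e n + 1 :=
    ⟨fun n => s n / 2, funext fun n => by dsimp only; have := ((hmemS _).1 (hmem n)).1; omega⟩
  have he : StrictMono e := fun a b hab => by
    have := hmono hab
    dsimp only at this
    omega
  have hrange : ∀ k, t k = true ↔ ∃ n, e n = k := fun k => by
    refine ⟨fun hk => ?_, fun ⟨n, hn⟩ => ?_⟩
    · have hk' : memS t (2 * k + 1) := (hmemS _).2 ⟨by omega, by rwa [Nat.mul_add_div two_pos]⟩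
      exact (hsurj _ hk').imp fun n hn => by dsimp only at hn; omega
    · simpa [← hn, Nat.mul_add_div two_pos] using ((hmemS _).1 (hmem n)).2
  have hsucc := enum_succ he hrange hno
  have hdiff : ∀ n, 2 * e (n + 1) + 1 - (2 * e n + 1) = if derivedWord t e n then 4 else 2 :=
    fun n => by
      rw [hsucc n, derivedWord]
      cases t (e n + 1) <;> simp <;> omega
  have hu : IsSturmian (derivedWord t e) :=
    isSturmian_derivedWord (fun n => (hrange _).2 ⟨n, rfl⟩) hsucc (enum_zero he hrange h0) hstur
  refine ⟨fun n => ?_, ⟨_, hu, hdiff⟩, ?_⟩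
  · rw [hdiff]
    split <;> simp
  · convert hu.comp_injective (f := fun b : Bool => if b then 4 else 2) (by decide)
    exact hdiff _
end
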